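/- Let q be a prime, let F_{q^r} be the field with q^r elements with Frobenius automorphism φ : x ↦ x^q, let k divide r and r/k divide n, let the cyclic group C_n = ⟨σ⟩ act on F_{q^r} via η(σ) = φ^k, and set m := gcd(q^k − 1, nk/r). Then the set of orbits of the pullback action of Aut_η(C_n) = {ψ ∈ Aut(C_n) : η ∘ ψ = η} on the cohomology group H²_η(C_n, F_{q^r}^*) is in bijection with the quotient of ℤ/mℤ by the equivalence relation a ∼_η b defined by: there exists an integer j with gcd(j, n) = 1 and j ≡ 1 (mod r/k) such that b ≡ j·a (mod m). -/

import Mathlib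

/-!
For a cyclic group `G = ⟨σ⟩` of order `n`, a 2-cocycle `f` is determined up to a coboundary by
`∏_{i<n} f(σ^i, σ)`, a fixed unit which is itself determined modulo norms; conversely a fixed
unit `x` is realised by the carry cocycle `(σ^a, σ^b) ↦ x ^ ⌊(a + b) / n⌋`. Hence
`H²_η(G, F^*) ≅ (F^*)^G / N(F^*)`. For `F = F_{q^r}` the fixed units are the `(q^k - 1)`-torsion
of the cyclic group `F^*` and the norm is the power map with exponent `∑_{i<n} q^{ki}`, so this
quotient is cyclic of order `gcd(q^k - 1, nk/r)`. Pulling a carry cocycle back along `σ ↦ σ^j`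
multiplies the total carry by `j`, so such an automorphism acts on `H²` as `c ↦ c^j`; it is
`η`-compatible iff `j ≡ 1` modulo the order `r/k` of `φ^k`.
-/

def IsTwoCocycle {G F : Type*} [Group G] [Field F] (η : G →* RingAut F)
    (f : G → G → Fˣ) : Prop :=
  ∀ g h k : G, η g (f h k : F) * ((f g (h * k) : Fˣ) : F) =
    ((f g h : Fˣ) : F) * ((f (g * h) k : Fˣ) : F)

def IsTwoCoboundary {G F : Type*} [Group G] [Field F] (η : G →* RingAut F)
    (f : G → G → Fˣ) : Prop :=
  ∃ r : G → Fˣ, ∀ g h : G,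
    (f g h : F) = (r g : F) * η g (r h : F) * (((r (g * h))⁻¹ : Fˣ) : F)

def Cohomologous {G F : Type*} [Group G] [Field F] (η : G →* RingAut F)
    (f₁ f₂ : G → G → Fˣ) : Prop :=
  IsTwoCoboundary η fun g h => f₁ g h * (f₂ g h)⁻¹

/-- The group of 2-cocycles, as a subgroup of all functions `G → G → Fˣ`. -/
def twoCocycles {G F : Type*} [Group G] [Field F] (η : G →* RingAut F) :
    Subgroup (G → G → Fˣ) where
  carrier := {f | IsTwoCocycle η f}
  one_mem' := by intro g h k; simp
  mul_mem' := by
    intro a b ha hb g h k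
    simp only [Pi.mul_apply, Units.val_mul, map_mul]
    rw [mul_mul_mul_comm, ha g h k, hb g h k, mul_mul_mul_comm]
  inv_mem' := by
    intro a ha g h k
    simp only [Pi.inv_apply, Units.val_inv_eq_inv_val, map_inv₀]
    rw [← mul_inv, ← mul_inv, ha g h k]

/-- The group of 2-coboundaries, as a subgroup of all functions `G → G → Fˣ`. -/
def twoCoboundaries {G F : Type*} [Group G] [Field F] (η : G →* RingAut F) :
    Subgroup (G → G → Fˣ) where
  carrier := {f | IsTwoCoboundary η f}
  one_mem' := ⟨1, by intro g h; simp⟩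
  mul_mem' := by
    rintro a b ⟨r, hr⟩ ⟨t, ht⟩
    refine ⟨r * t, fun g h => ?_⟩
    simp only [Pi.mul_apply, Units.val_mul, map_mul, mul_inv, hr g h, ht g h,
      Units.val_inv_eq_inv_val]
    ring
  inv_mem' := by
    rintro a ⟨r, hr⟩
    refine ⟨r⁻¹, fun g h => ?_⟩
    simp only [Pi.inv_apply, Units.val_inv_eq_inv_val, map_inv₀, hr g h, inv_inv, mul_inv]

/-- The second cohomology group `H²_η(G, F^*)`: 2-cocycles modulo 2-coboundaries. -/
abbrev H2 {G F : Type*} [Group G] [Field F] (η : G →* RingAut F) :=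
  twoCocycles η ⧸ ((twoCoboundaries η).subgroupOf (twoCocycles η))

/-- The norm map `x ↦ ∏_{i=0}^{n-1} σ^i(x)` on `F^*`. -/
def cyclicNormHom {G F : Type*} [Group G] [Field F] (η : G →* RingAut F) (σ : G) (n : ℕ) :
    Fˣ →* Fˣ where
  toFun x := ∏ i ∈ Finset.range n, Units.map (η (σ ^ i)).toMonoidHom x
  map_one' := by simp
  map_mul' x y := by simp [Finset.prod_mul_distrib]

/-- The subgroup `(F^*)^{C_n}` of elements of `F^*` fixed by the action. -/
def fixedUnits {G F : Type*} [Group G] [Field F] (η : G →* RingAut F) :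
    Subgroup Fˣ where
  carrier := {x | ∀ g : G, η g (x : F) = (x : F)}
  one_mem' := by intro g; simp
  mul_mem' := by intro a b ha hb g; simp [ha g, hb g]
  inv_mem' := by intro a ha g; simp [ha g]

/-- The orbit relation on `H²_η(G, F^*)` induced by the pullback action of the group
of `η`-compatible automorphisms of `G`: `c₂` is obtained from `c₁` by pulling back
along some `η`-compatible automorphism `ψ`. -/
def pullbackRel {G F : Type*} [Group G] [Field F] (η : G →* RingAut F)
    (c₁ c₂ : H2 η) : Prop :=
  ∃ ψ : MulAut G, (∀ g : G, η (ψ g) = η g) ∧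
    ∃ (f : G → G → Fˣ) (hf : f ∈ twoCocycles η)
      (hf' : (fun g g' => f (ψ g) (ψ g')) ∈ twoCocycles η),
      c₁ = QuotientGroup.mk ⟨f, hf⟩ ∧
      c₂ = QuotientGroup.mk ⟨fun g g' => f (ψ g) (ψ g'), hf'⟩

open Finset

theorem Nat.div_add_add_mod_div {n : ℕ} (hn : 0 < n) (a b : ℕ) :
    b / n + (a + b % n) / n = (a + b) / n := by
  conv_rhs => rw [← Nat.mod_add_div b n, ← add_assoc, Nat.add_mul_div_left _ _ hn, add_comm]

theorem Nat.carry_cocycle {n : ℕ} (hn : 0 < n) (a b c : ℕ) :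
    (b + c) / n + (a + (b + c) % n) / n = (a + b) / n + ((a + b) % n + c) / n := by
  rw [Nat.div_add_add_mod_div hn, add_comm ((a + b) % n), Nat.div_add_add_mod_div hn]
  ring_nf

theorem Nat.sum_range_mul_mod_add_mod_div {n : ℕ} (hn : 0 < n) (j : ℕ) :
    ∑ i ∈ range n, (i * j % n + j % n) / n = j % n := by
  have step : ∀ i, (i * j % n + j % n) / n * n + (i + 1) * j % n = i * j % n + j % n := by
    intro i
    rw [add_one_mul, Nat.add_mod, Nat.div_add_mod']
  have shift : ∑ i ∈ range n, (i + 1) * j % n = ∑ i ∈ range n, i * j % n := by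
    have h := (sum_range_succ' (fun i => i * j % n) n).symm.trans (sum_range_succ _ n)
    simpa using h
  have hsum := sum_congr rfl fun i (_ : i ∈ range n) => step i
  rw [sum_add_distrib, sum_add_distrib, ← sum_mul, shift, sum_const, card_range,
    smul_eq_mul] at hsum
  exact Nat.eq_of_mul_eq_mul_right hn (by linarith)

theorem geom_sum_range_mul {R : Type*} [CommSemiring R] (x : R) (t u : ℕ) :
    ∑ i ∈ range (t * u), x ^ i = (∑ i ∈ range t, x ^ i) * ∑ j ∈ range u, (x ^ t) ^ j := by
  induction u with
  | zero => simp
  | succ u ih =>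
    rw [Nat.mul_succ, sum_range_add, ih, sum_range_succ, mul_add, ← pow_mul,
      sum_mul (range t) _ (x ^ (t * u))]
    exact congrArg _ (sum_congr rfl fun i _ => by rw [pow_add, mul_comm])

theorem Nat.geom_sum_pow_modEq {p : ℕ} (hp : 1 ≤ p) (t u : ℕ) :
    ∑ j ∈ range u, (p ^ t) ^ j ≡ u [MOD p - 1] := by
  obtain ⟨d, rfl⟩ := Nat.exists_eq_add_of_le' hp
  rw [Nat.add_sub_cancel, ← ZMod.natCast_eq_natCast_iff]
  simp

theorem Nat.gcd_pow_sub_one_geom_sum {p : ℕ} (hp : 1 ≤ p) (t u : ℕ) :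
    Nat.gcd (p ^ t - 1) (∑ i ∈ range (t * u), p ^ i)
      = (∑ i ∈ range t, p ^ i) * Nat.gcd (p - 1) u := by
  rw [← geom_sum_mul_of_one_le hp, geom_sum_range_mul, Nat.gcd_mul_left,
    Nat.gcd_comm, (Nat.geom_sum_pow_modEq hp t u).gcd_eq, Nat.gcd_comm]

section CyclicGroup

variable {G : Type*} [Group G]

structure IsCyclicGenerator (σ : G) (n : ℕ) : Prop where
  mem_zpowers : ∀ g : G, g ∈ Subgroup.zpowers σ
  orderOf_eq : orderOf σ = n
  pos : 0 < n

noncomputable def cycIdx (σ : G) (n : ℕ) (g : G) : ℕ :=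
  sInf {i | i < n ∧ σ ^ i = g}

namespace IsCyclicGenerator

variable {σ : G} {n : ℕ}

theorem isOfFinOrder (hσ : IsCyclicGenerator σ n) : IsOfFinOrder σ :=
  orderOf_pos_iff.1 (hσ.orderOf_eq ▸ hσ.pos)

theorem exists_pow_eq (hσ : IsCyclicGenerator σ n) (g : G) : ∃ i, i < n ∧ σ ^ i = g := by
  obtain ⟨i, hi⟩ := hσ.isOfFinOrder.mem_powers_iff_mem_zpowers.2 (hσ.mem_zpowers g)
  exact ⟨i % n, Nat.mod_lt _ hσ.pos, by rw [← hσ.orderOf_eq, pow_mod_orderOf]; exact hi⟩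

theorem cycIdx_lt (hσ : IsCyclicGenerator σ n) (g : G) : cycIdx σ n g < n :=
  (Nat.sInf_mem (hσ.exists_pow_eq g)).1

theorem pow_cycIdx (hσ : IsCyclicGenerator σ n) (g : G) : σ ^ cycIdx σ n g = g :=
  (Nat.sInf_mem (hσ.exists_pow_eq g)).2

theorem cycIdx_pow (hσ : IsCyclicGenerator σ n) (a : ℕ) : cycIdx σ n (σ ^ a) = a % n := by
  have h := pow_eq_pow_iff_modEq.1 (hσ.pow_cycIdx (σ ^ a))
  rwa [hσ.orderOf_eq, Nat.ModEq, Nat.mod_eq_of_lt (hσ.cycIdx_lt _)] at h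

theorem cycIdx_mul (hσ : IsCyclicGenerator σ n) (g h : G) :
    cycIdx σ n (g * h) = (cycIdx σ n g + cycIdx σ n h) % n := by
  conv_lhs => rw [← hσ.pow_cycIdx g, ← hσ.pow_cycIdx h, ← pow_add, hσ.cycIdx_pow]

theorem card_eq (hσ : IsCyclicGenerator σ n) : Nat.card G = n := by
  rw [← hσ.orderOf_eq, orderOf_eq_card_of_forall_mem_zpowers hσ.mem_zpowers]

theorem commute (hσ : IsCyclicGenerator σ n) (a b : G) : Commute a b := by
  obtain ⟨x, rfl⟩ := Subgroup.mem_zpowers_iff.1 (hσ.mem_zpowers a)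
  obtain ⟨y, rfl⟩ := Subgroup.mem_zpowers_iff.1 (hσ.mem_zpowers b)
  exact Commute.zpow_zpow_self σ x y

theorem exists_mulAut_pow (hσ : IsCyclicGenerator σ n) {j : ℕ} (hj : j.Coprime n) :
    ∃ ψ : MulAut G, ∀ g, ψ g = g ^ j :=
  ⟨{ powCoprime (hσ.card_eq ▸ hj.symm) with
      map_mul' := fun a b => (hσ.commute a b).mul_pow j }, fun _ => rfl⟩

theorem coprime_of_mulEquiv (hσ : IsCyclicGenerator σ n) (ψ : G ≃* G) {j : ℕ}
    (hj : ψ σ = σ ^ j) : j.Coprime n := by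
  have h := ψ.orderOf_eq σ
  rw [hj, hσ.isOfFinOrder.orderOf_pow, hσ.orderOf_eq, Nat.div_eq_self] at h
  exact Nat.coprime_comm.1 (h.resolve_left hσ.pos.ne')

theorem pow_eq_one (hσ : IsCyclicGenerator σ n) : σ ^ n = 1 :=
  hσ.orderOf_eq ▸ pow_orderOf_eq_one σ

end IsCyclicGenerator

theorem prod_range_pow_succ {M : Type*} [CancelCommMonoid M] {σ : G} {n : ℕ} (hσn : σ ^ n = 1)
    (T : G → M) : ∏ i ∈ range n, T (σ ^ (i + 1)) = ∏ i ∈ range n, T (σ ^ i) := by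
  have h := (prod_range_succ' (fun i => T (σ ^ i)) n).symm.trans
    (prod_range_succ (fun i => T (σ ^ i)) n)
  rwa [pow_zero, hσn, mul_left_inj] at h

theorem pow_apply_eq_self_of_generator {H : Type*} [Group H] {σ : G}
    (hσ : ∀ g : G, g ∈ Subgroup.zpowers σ)
    (φ : G →* H) {j : ℕ} (h : φ σ ^ j = φ σ) (g : G) : φ g ^ j = φ g := by
  obtain ⟨z, rfl⟩ := Subgroup.mem_zpowers_iff.1 (hσ g)
  rw [map_zpow, ← zpow_natCast, ← zpow_mul, mul_comm, zpow_mul, zpow_natCast, h]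

end CyclicGroup

section Cohomology

variable {G F : Type*} [Group G] [Field F] {η : G →* RingAut F}

def actUnits (η : G →* RingAut F) (g : G) : Fˣ →* Fˣ := Units.map (η g).toMonoidHom

@[simp]
theorem coe_actUnits (g : G) (x : Fˣ) : (actUnits η g x : F) = η g x := rfl

@[simp]
theorem actUnits_one (x : Fˣ) : actUnits η 1 x = x :=
  Units.ext (by rw [coe_actUnits, map_one]; rfl)

theorem actUnits_mul (g h : G) (x : Fˣ) :
    actUnits η (g * h) x = actUnits η g (actUnits η h x) :=
  Units.ext (by simp only [coe_actUnits, map_mul]; rfl)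

def coboundary (η : G →* RingAut F) (r : G → Fˣ) : G → G → Fˣ :=
  fun g h => r g * actUnits η g (r h) * (r (g * h))⁻¹

theorem mem_twoCocycles_iff {f : G → G → Fˣ} : f ∈ twoCocycles η ↔
    ∀ g h k, actUnits η g (f h k) * f g (h * k) = f g h * f (g * h) k :=
  ⟨fun h g k l => Units.ext (h g k l), fun h g k l => congrArg Units.val (h g k l)⟩

theorem mem_twoCoboundaries_iff {f : G → G → Fˣ} :
    f ∈ twoCoboundaries η ↔ ∃ r, coboundary η r = f :=
  exists_congr fun _ => ⟨fun h => funext₂ fun g k => (Units.ext (h g k)).symm,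
    fun h g k => by rw [← h]; rfl⟩

theorem coboundary_mem_twoCocycles (r : G → Fˣ) : coboundary η r ∈ twoCocycles η := by
  refine mem_twoCocycles_iff.2 fun g h k => ?_
  simp only [coboundary, map_mul, map_inv, actUnits_mul, mul_assoc]
  apply Additive.ofMul.injective
  simp only [ofMul_mul, ofMul_inv]
  abel

def cyclicProd {M : Type*} [CommMonoid M] (σ : G) (n : ℕ) : (G → G → M) →* M where
  toFun f := ∏ i ∈ range n, f (σ ^ i) σ
  map_one' := by simp
  map_mul' f f' := by simp [prod_mul_distrib]

variable {σ : G} {n : ℕ}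

theorem cyclicProd_apply {M : Type*} [CommMonoid M] (f : G → G → M) :
    cyclicProd σ n f = ∏ i ∈ range n, f (σ ^ i) σ := rfl

theorem cyclicNormHom_apply (x : Fˣ) :
    cyclicNormHom η σ n x = ∏ i ∈ range n, actUnits η (σ ^ i) x := rfl

theorem actUnits_of_mem_fixedUnits {x : Fˣ} (hx : x ∈ fixedUnits η) (g : G) :
    actUnits η g x = x :=
  Units.ext (hx g)

theorem cyclicNormHom_of_mem_fixedUnits {x : Fˣ} (hx : x ∈ fixedUnits η) :
    cyclicNormHom η σ n x = x ^ n := by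
  simp [cyclicNormHom_apply, actUnits_of_mem_fixedUnits hx]

theorem mem_fixedUnits_iff (hσ : ∀ g : G, g ∈ Subgroup.zpowers σ) {x : Fˣ} :
    x ∈ fixedUnits η ↔ actUnits η σ x = x := by
  refine ⟨fun hx => actUnits_of_mem_fixedUnits hx σ, fun h g => ?_⟩
  have hs : η σ ∈ MulAction.stabilizer (RingAut F) (x : F) := congrArg Units.val h
  obtain ⟨z, rfl⟩ := Subgroup.mem_zpowers_iff.1 (hσ g)
  rw [map_zpow]
  exact Subgroup.zpow_mem _ hs z

theorem cyclicProd_coboundary (hσn : σ ^ n = 1) (r : G → Fˣ) :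
    cyclicProd σ n (coboundary η r) = cyclicNormHom η σ n (r σ) := by
  simp only [cyclicProd_apply, coboundary, ← pow_succ, prod_mul_distrib, prod_inv_distrib,
    prod_range_pow_succ hσn r, cyclicNormHom_apply]
  exact mul_inv_cancel_comm _ _

namespace IsCyclicGenerator

theorem cyclicProd_mem_fixedUnits (hσ : IsCyclicGenerator σ n) {f : G → G → Fˣ}
    (hf : f ∈ twoCocycles η) : cyclicProd σ n f ∈ fixedUnits η := by
  rw [mem_fixedUnits_iff hσ.mem_zpowers, cyclicProd_apply, map_prod]
  have h := prod_congr rfl fun i (_ : i ∈ range n) => mem_twoCocycles_iff.1 hf σ (σ ^ i) σ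
  simp only [← pow_succ, ← pow_succ', prod_mul_distrib, prod_range_pow_succ hσ.pow_eq_one (f σ),
    prod_range_pow_succ hσ.pow_eq_one (f · σ)] at h
  exact mul_right_cancel (h.trans (mul_comm _ _))

theorem range_cyclicNormHom_le (hσ : IsCyclicGenerator σ n) :
    (cyclicNormHom η σ n).range ≤ fixedUnits η := by
  rintro _ ⟨c, rfl⟩
  rw [mem_fixedUnits_iff hσ.mem_zpowers, cyclicNormHom_apply, map_prod]
  simp_rw [← actUnits_mul, ← pow_succ']
  exact prod_range_pow_succ hσ.pow_eq_one fun g => actUnits η g c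

theorem eq_one_of_forall_apply_sigma_eq_one (hσ : IsCyclicGenerator σ n) {f : G → G → Fˣ}
    (hf : f ∈ twoCocycles η) (h : ∀ g, f g σ = 1) : f = 1 := by
  have hc := mem_twoCocycles_iff.1 hf
  have h11 : f 1 1 = 1 := by simpa [h] using (hc 1 1 σ).symm
  have hg1 : ∀ g, f g 1 = 1 := fun g => by simpa [h11] using hc g 1 1
  have hpow : ∀ b g, f g (σ ^ b) = 1 := by
    intro b
    induction b with
    | zero => simpa using hg1
    | succ b ih => intro g; simpa [h, ih, pow_succ] using hc g (σ ^ b) σ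
  funext g h'
  rw [← hσ.pow_cycIdx h']
  exact hpow _ g

theorem exists_coboundary_apply_sigma_eq (hσ : IsCyclicGenerator σ n) (f : G → G → Fˣ) {c : Fˣ}
    (hc : cyclicProd σ n f = cyclicNormHom η σ n c) :
    ∃ r : G → Fˣ, ∀ g, coboundary η r g σ = f g σ := by
  -- With `r σ = c`, the condition `coboundary η r (σ ^ a) σ = f (σ ^ a) σ` forces
  -- `r (σ ^ a) = T a`; `hc` says exactly that `T n = T 0`.
  set T : ℕ → Fˣ := fun a => f 1 σ * ∏ i ∈ range a, actUnits η (σ ^ i) c * (f (σ ^ i) σ)⁻¹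
    with hT
  have hT_succ : ∀ a, T (a + 1) = T a * (actUnits η (σ ^ a) c * (f (σ ^ a) σ)⁻¹) := fun a => by
    simp only [hT, prod_range_succ, mul_assoc]
  have hT_wrap : ∀ a < n, T ((a + 1) % n) = T (a + 1) := by
    intro a ha
    rcases (show a + 1 ≤ n from ha).lt_or_eq with h | h
    · rw [Nat.mod_eq_of_lt h]
    · rw [h, Nat.mod_self, hT]
      dsimp only
      rw [prod_range_zero, prod_mul_distrib, prod_inv_distrib, ← cyclicNormHom_apply,
        ← cyclicProd_apply, hc, mul_inv_cancel]
  have hσ1 : cycIdx σ n σ = (0 + 1) % n := by simpa using hσ.cycIdx_pow 1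
  have hrσ : T (cycIdx σ n σ) = c := by
    rw [hσ1, hT_wrap 0 hσ.pos, hT_succ]
    simp [hT, mul_inv_cancel_comm_assoc]
  refine ⟨fun g => T (cycIdx σ n g), fun g => ?_⟩
  obtain ⟨i, hi, rfl⟩ : ∃ i < n, σ ^ i = g := ⟨_, hσ.cycIdx_lt g, hσ.pow_cycIdx g⟩
  have hidx : cycIdx σ n (σ ^ i * σ) = (i + 1) % n := by rw [← pow_succ, hσ.cycIdx_pow]
  simp only [coboundary, hrσ, hidx, hT_wrap i hi, hT_succ, hσ.cycIdx_pow, Nat.mod_eq_of_lt hi]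
  apply Additive.ofMul.injective
  simp only [ofMul_mul, ofMul_inv]
  abel

theorem mem_twoCoboundaries_of_cyclicProd (hσ : IsCyclicGenerator σ n) {f : G → G → Fˣ}
    (hf : f ∈ twoCocycles η) {c : Fˣ} (hc : cyclicProd σ n f = cyclicNormHom η σ n c) :
    f ∈ twoCoboundaries η := by
  obtain ⟨r, hr⟩ := hσ.exists_coboundary_apply_sigma_eq f hc
  have h := hσ.eq_one_of_forall_apply_sigma_eq_one
    (mul_mem hf (inv_mem (coboundary_mem_twoCocycles r))) fun g => by simp [hr g]
  exact mem_twoCoboundaries_iff.2 ⟨r, (mul_inv_eq_one.1 h).symm⟩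

theorem mk_eq_one_iff_cyclicProd_mem_range (hσ : IsCyclicGenerator σ n) (a : twoCocycles η) :
    (QuotientGroup.mk a : H2 η) = 1 ↔
      cyclicProd σ n (a : G → G → Fˣ) ∈ (cyclicNormHom η σ n).range := by
  rw [QuotientGroup.eq_one_iff, Subgroup.mem_subgroupOf]
  constructor
  · intro ha
    obtain ⟨r, hr⟩ := mem_twoCoboundaries_iff.1 ha
    exact ⟨r σ, by rw [← hr, cyclicProd_coboundary hσ.pow_eq_one]⟩
  · rintro ⟨c, hc⟩
    exact hσ.mem_twoCoboundaries_of_cyclicProd a.2 hc.symm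

end IsCyclicGenerator

noncomputable def carryCocycle {M : Type*} [CommMonoid M] (σ : G) (n : ℕ) : M →* (G → G → M) where
  toFun x g h := x ^ ((cycIdx σ n g + cycIdx σ n h) / n)
  map_one' := by ext; simp
  map_mul' x y := by ext; simp [mul_pow]

theorem carryCocycle_apply {M : Type*} [CommMonoid M] (x : M) (g h : G) :
    carryCocycle σ n x g h = x ^ ((cycIdx σ n g + cycIdx σ n h) / n) := rfl

theorem div_mem_range_cyclicNormHom {x : Fˣ} (hx : x ∈ fixedUnits η) {a b : ℕ}
    (h : a ≡ b [MOD n]) : x ^ a / x ^ b ∈ (cyclicNormHom η σ n).range := by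
  have key : ∀ c, x ^ c = x ^ (c % n) * cyclicNormHom η σ n (x ^ (c / n)) := fun c => by
    rw [map_pow, cyclicNormHom_of_mem_fixedUnits hx, ← pow_mul, ← pow_add, Nat.mod_add_div]
  rw [key a, key b, show a % n = b % n from h, mul_div_mul_left_eq_div, ← map_div]
  exact ⟨_, rfl⟩

namespace IsCyclicGenerator

theorem carryCocycle_mem_twoCocycles (hσ : IsCyclicGenerator σ n) {x : Fˣ}
    (hx : x ∈ fixedUnits η) : carryCocycle σ n x ∈ twoCocycles η := by
  refine mem_twoCocycles_iff.2 fun g h k => ?_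
  simp only [carryCocycle_apply, map_pow, actUnits_of_mem_fixedUnits hx, hσ.cycIdx_mul, ← pow_add]
  rw [Nat.carry_cocycle hσ.pos]

theorem cyclicProd_carryCocycle_comp {M : Type*} [CommMonoid M] (hσ : IsCyclicGenerator σ n)
    (ψ : G →* G) {j : ℕ} (hj : ψ σ = σ ^ j) (x : M) :
    cyclicProd σ n (fun g g' => carryCocycle σ n x (ψ g) (ψ g')) = x ^ (j % n) := by
  have h : ∀ i, carryCocycle σ n x (ψ (σ ^ i)) (ψ σ) = x ^ ((i * j % n + j % n) / n) := fun i => by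
    rw [map_pow, hj, ← pow_mul, carryCocycle_apply, hσ.cycIdx_pow, hσ.cycIdx_pow, mul_comm j i]
  simp only [cyclicProd_apply, h, prod_pow_eq_pow_sum, Nat.sum_range_mul_mod_add_mod_div hσ.pos]

theorem cyclicProd_carryCocycle {M : Type*} [CommMonoid M] (hσ : IsCyclicGenerator σ n)
    (x : M) : cyclicProd σ n (carryCocycle σ n x) = x ^ (1 % n) :=
  hσ.cyclicProd_carryCocycle_comp (MonoidHom.id G) (pow_one σ).symm x

noncomputable def carryClass (hσ : IsCyclicGenerator σ n) (η : G →* RingAut F) :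
    fixedUnits η →* H2 η :=
  (QuotientGroup.mk' _).comp (((carryCocycle σ n).comp (fixedUnits η).subtype).codRestrict _
    fun x => hσ.carryCocycle_mem_twoCocycles x.2)

theorem carryClass_apply (hσ : IsCyclicGenerator σ n) (x : fixedUnits η) :
    hσ.carryClass η x =
      QuotientGroup.mk ⟨carryCocycle σ n (x : Fˣ), hσ.carryCocycle_mem_twoCocycles x.2⟩ :=
  rfl

theorem carryClass_surjective (hσ : IsCyclicGenerator σ n) :
    Function.Surjective (hσ.carryClass η) := by
  intro c
  obtain ⟨a, rfl⟩ := QuotientGroup.mk_surjective c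
  refine ⟨⟨_, hσ.cyclicProd_mem_fixedUnits a.2⟩, ?_⟩
  rw [carryClass_apply, ← div_eq_one, ← QuotientGroup.mk_div,
    hσ.mk_eq_one_iff_cyclicProd_mem_range, Subgroup.coe_div, map_div, hσ.cyclicProd_carryCocycle]
  simpa using div_mem_range_cyclicNormHom (hσ.cyclicProd_mem_fixedUnits a.2) (Nat.mod_modEq 1 n)

theorem ker_carryClass (hσ : IsCyclicGenerator σ n) :
    (hσ.carryClass η).ker = (cyclicNormHom η σ n).range.subgroupOf (fixedUnits η) := by
  ext x
  rw [MonoidHom.mem_ker, Subgroup.mem_subgroupOf, carryClass_apply,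
    hσ.mk_eq_one_iff_cyclicProd_mem_range, hσ.cyclicProd_carryCocycle,
    ← div_mul_cancel ((x : Fˣ) ^ (1 % n)) x]
  exact Subgroup.mul_mem_cancel_left _
    (by simpa using div_mem_range_cyclicNormHom x.2 (Nat.mod_modEq 1 n))

theorem card_H2 (hσ : IsCyclicGenerator σ n) :
    Nat.card (H2 η) = (cyclicNormHom η σ n).range.relIndex (fixedUnits η) := by
  rw [Subgroup.relIndex, ← hσ.ker_carryClass, Subgroup.index_ker,
    MonoidHom.range_eq_top.2 hσ.carryClass_surjective, Subgroup.card_top]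

end IsCyclicGenerator

theorem pullback_mem_twoCocycles {ψ : G →* G} (hψ : ∀ g, η (ψ g) = η g) {f : G → G → Fˣ}
    (hf : f ∈ twoCocycles η) : (fun g g' => f (ψ g) (ψ g')) ∈ twoCocycles η := fun g h k => by
  simpa only [map_mul, hψ] using hf (ψ g) (ψ h) (ψ k)

theorem pullback_coboundary {ψ : G →* G} (hψ : ∀ g, η (ψ g) = η g) (r : G → Fˣ) :
    (fun g g' => coboundary η r (ψ g) (ψ g')) = coboundary η (fun g => r (ψ g)) := by
  funext g g'
  simp only [coboundary, actUnits, hψ, map_mul]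

def pullbackCocycles (ψ : G →* G) (hψ : ∀ g, η (ψ g) = η g) : twoCocycles η →* twoCocycles η where
  toFun f := ⟨fun g g' => f.1 (ψ g) (ψ g'), pullback_mem_twoCocycles hψ f.2⟩
  map_one' := rfl
  map_mul' _ _ := rfl

def H2.pullback (ψ : G →* G) (hψ : ∀ g, η (ψ g) = η g) : H2 η →* H2 η :=
  QuotientGroup.map _ _ (pullbackCocycles ψ hψ) fun f hf => by
    obtain ⟨r, hr⟩ := mem_twoCoboundaries_iff.1 (Subgroup.mem_subgroupOf.1 hf)
    refine Subgroup.mem_comap.2 (Subgroup.mem_subgroupOf.2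
      (mem_twoCoboundaries_iff.2 ⟨fun g => r (ψ g), ?_⟩))
    rw [← pullback_coboundary hψ, hr]
    rfl

namespace IsCyclicGenerator

theorem pullback_eq_pow (hσ : IsCyclicGenerator σ n) {ψ : G →* G} (hψ : ∀ g, η (ψ g) = η g)
    {j : ℕ} (hj : ψ σ = σ ^ j) : H2.pullback ψ hψ = powMonoidHom (α := H2 η) j := by
  refine (MonoidHom.cancel_right hσ.carryClass_surjective).1 (MonoidHom.ext fun x => ?_)
  rw [MonoidHom.comp_apply, MonoidHom.comp_apply, powMonoidHom_apply, ← div_eq_one,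
    carryClass_apply, H2.pullback, QuotientGroup.map_mk, ← QuotientGroup.mk_pow,
    ← QuotientGroup.mk_div, hσ.mk_eq_one_iff_cyclicProd_mem_range, Subgroup.coe_div,
    Subgroup.coe_pow, map_div, map_pow]
  change cyclicProd σ n (fun g g' => carryCocycle σ n (x : Fˣ) (ψ g) (ψ g')) / _ ∈ _
  rw [hσ.cyclicProd_carryCocycle_comp ψ hj, hσ.cyclicProd_carryCocycle, ← pow_mul]
  exact div_mem_range_cyclicNormHom x.2 ((Nat.mod_modEq j n).trans
    (((Nat.mod_modEq 1 n).mul_right j).trans (by rw [one_mul])).symm)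

theorem pullbackRel_iff (hσ : IsCyclicGenerator σ n) (c₁ c₂ : H2 η) :
    pullbackRel η c₁ c₂ ↔ ∃ j : ℕ, j.Coprime n ∧ η σ ^ j = η σ ∧ c₂ = c₁ ^ j := by
  constructor
  · rintro ⟨ψ, hψ, f, hf, hf', rfl, rfl⟩
    have hj : ψ σ = σ ^ cycIdx σ n (ψ σ) := (hσ.pow_cycIdx _).symm
    refine ⟨_, hσ.coprime_of_mulEquiv ψ hj, by rw [← map_pow, ← hj, hψ], ?_⟩
    exact DFunLike.congr_fun (hσ.pullback_eq_pow (ψ := ψ.toMonoidHom) hψ hj)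
      (QuotientGroup.mk ⟨f, hf⟩ : H2 η)
  · rintro ⟨j, hcop, hηj, rfl⟩
    obtain ⟨ψ, hψ⟩ := hσ.exists_mulAut_pow hcop
    have hψη : ∀ g, η (ψ g) = η g := fun g => by
      rw [hψ, map_pow, pow_apply_eq_self_of_generator hσ.mem_zpowers η hηj]
    obtain ⟨⟨f, hf⟩, rfl⟩ := QuotientGroup.mk_surjective c₁
    exact ⟨ψ, hψη, f, hf, pullback_mem_twoCocycles (ψ := ψ.toMonoidHom) hψη hf, rfl,
      (DFunLike.congr_fun (hσ.pullback_eq_pow (ψ := ψ.toMonoidHom) hψη (hψ σ)) _).symm⟩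

end IsCyclicGenerator

end Cohomology

theorem IsCyclic.exists_equiv_zmod {H : Type*} [Group H] [IsCyclic H] {m : ℕ}
    (hm : Nat.card H = m) : ∃ E : H ≃ ZMod m, ∀ (c : H) (j : ℕ), E (c ^ j) = j * E c := by
  subst hm
  refine ⟨(zmodCyclicMulEquiv ‹_›).symm.toEquiv.trans Multiplicative.toAdd, fun c j => ?_⟩
  simp [nsmul_eq_mul]

section FiniteField

variable {F : Type*} [Field F]

theorem RingAut.pow_apply_of_forall_apply_eq_pow {e : RingAut F} {m : ℕ} (he : ∀ x, e x = x ^ m)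
    (a : ℕ) (x : F) : (e ^ a) x = x ^ m ^ a := by
  induction a with
  | zero => simp
  | succ a ih => rw [pow_succ', RingAut.mul_apply, ih, he, ← pow_mul, ← pow_succ]

theorem FiniteField.forall_pow_pow_eq_self_iff [Fintype F] {q r : ℕ} (hq : 1 < q)
    (hF : Fintype.card F = q ^ r) (t : ℕ) : (∀ x : F, x ^ q ^ t = x) ↔ r ∣ t := by
  constructor
  · intro h
    have hdvd : q ^ r - 1 ∣ q ^ t - 1 := by
      rw [← hF, ← FiniteField.forall_pow_eq_one_iff]
      intro x
      have hx : x ^ (q ^ t - 1) * x = x := by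
        rw [pow_sub_one_mul (pow_pos (by omega) t).ne']
        exact Units.ext (by push_cast; exact h x)
      exact mul_eq_right.1 hx
    have hg := Nat.pow_sub_one_gcd_pow_sub_one q r t
    rw [Nat.gcd_eq_left hdvd] at hg
    have hpow : q ^ r = q ^ Nat.gcd r t := by
      have := Nat.one_le_pow r q (by omega)
      have := Nat.one_le_pow (Nat.gcd r t) q (by omega)
      omega
    exact Nat.gcd_eq_left_iff_dvd.1 (Nat.pow_right_injective hq hpow).symm
  · rintro ⟨w, rfl⟩ x
    rw [pow_mul, ← hF]
    exact FiniteField.pow_card_pow w x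

theorem orderOf_eq_div_of_forall_apply_eq_pow_pow [Fintype F] {q r k : ℕ} (hq : 1 < q)
    (hF : Fintype.card F = q ^ r) (hk : 0 < k) (hkr : k ∣ r) {e : RingAut F}
    (he : ∀ x, e x = x ^ q ^ k) : orderOf e = r / k := by
  obtain ⟨t, rfl⟩ := hkr
  have h : ∀ a, e ^ a = 1 ↔ t ∣ a := fun a => by
    simp only [RingEquiv.ext_iff, RingAut.pow_apply_of_forall_apply_eq_pow he, RingAut.one_apply,
      ← pow_mul, FiniteField.forall_pow_pow_eq_self_iff hq hF, Nat.mul_dvd_mul_iff_left hk]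
  rw [Nat.mul_div_cancel_left t hk]
  exact Nat.dvd_antisymm (orderOf_dvd_of_pow_eq_one ((h t).2 dvd_rfl))
    ((h _).1 (pow_orderOf_eq_one e))

variable {G : Type*} [Group G] {σ : G} {η : G →* RingAut F} {n q k : ℕ}

theorem mem_fixedUnits_iff_pow_eq_one (hσ : ∀ g : G, g ∈ Subgroup.zpowers σ) (hq : 0 < q)
    (hη : ∀ x, η σ x = x ^ q ^ k) {x : Fˣ} : x ∈ fixedUnits η ↔ x ^ (q ^ k - 1) = 1 := by
  have h : actUnits η σ x = x ^ q ^ k := Units.ext (by simp [hη])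
  rw [mem_fixedUnits_iff hσ, h, ← pow_sub_one_mul (pow_pos hq k).ne', mul_eq_right]

theorem cyclicNormHom_eq_powMonoidHom (hη : ∀ x, η σ x = x ^ q ^ k) :
    cyclicNormHom η σ n = powMonoidHom (∑ i ∈ range n, (q ^ k) ^ i) := by
  refine MonoidHom.ext fun x => Units.ext ?_
  simp [cyclicNormHom_apply, ← prod_pow_eq_pow_sum, map_pow,
    RingAut.pow_apply_of_forall_apply_eq_pow hη]

theorem fixedUnits_eq_ker_powMonoidHom (hσ : ∀ g : G, g ∈ Subgroup.zpowers σ) (hq : 0 < q)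
    (hη : ∀ x, η σ x = x ^ q ^ k) : fixedUnits η = (powMonoidHom (q ^ k - 1)).ker :=
  Subgroup.ext fun _ => mem_fixedUnits_iff_pow_eq_one hσ hq hη

theorem relIndex_range_cyclicNormHom [Fintype F] {r : ℕ} (hσ : IsCyclicGenerator σ n)
    (hq : 1 < q) (hF : Fintype.card F = q ^ r) (hk : 0 < k) (hkr : k ∣ r) (hrkn : r / k ∣ n)
    (hη : ∀ x, η σ x = x ^ q ^ k) :
    (cyclicNormHom η σ n).range.relIndex (fixedUnits η) = Nat.gcd (q ^ k - 1) (n * k / r) := by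
  obtain ⟨t, rfl⟩ := hkr
  rw [Nat.mul_div_cancel_left t hk] at hrkn
  obtain ⟨u, rfl⟩ := hrkn
  have ht : 0 < t := Nat.pos_of_ne_zero fun h => by simpa [h] using hσ.pos
  have hu : t * u * k / (k * t) = u := Nat.div_eq_of_eq_mul_left (by positivity) (by ring)
  set p := q ^ k
  have hp : 1 < p := Nat.one_lt_pow hk.ne' hq
  have hcard : Nat.card Fˣ = p ^ t - 1 := by
    rw [Nat.card_units, Nat.card_eq_fintype_card, hF, pow_mul]
  have hD : p ^ t - 1 = (∑ i ∈ range t, p ^ i) * (p - 1) := (geom_sum_mul_of_one_le hp.le t).symm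
  have hDpos : 0 < ∑ i ∈ range t, p ^ i :=
    sum_pos (fun i _ => by positivity) (nonempty_range_iff.2 ht.ne')
  have hle := hσ.range_cyclicNormHom_le (η := η)
  rw [fixedUnits_eq_ker_powMonoidHom hσ.mem_zpowers (by omega) hη,
    cyclicNormHom_eq_powMonoidHom hη] at hle ⊢
  -- `[Fˣ : N] = [(F^*)^G : N] * [Fˣ : (F^*)^G]`, the outer indices being computed in the
  -- cyclic group `Fˣ`.
  have key := Subgroup.relIndex_mul_index hle
  rw [IsCyclic.index_powMonoidHom_ker, IsCyclic.index_powMonoidHom_range, hcard,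
    Nat.gcd_pow_sub_one_geom_sum hp.le, hD, Nat.gcd_mul_left_left,
    Nat.mul_div_cancel _ (by omega)] at key
  rw [hu]
  exact Nat.eq_of_mul_eq_mul_right hDpos (key.trans (mul_comm _ _))

end FiniteField

theorem orbits_equiv_zmod_quot_general {G F : Type*} [Group G] [Field F] [Fintype F]
    (q r k n : ℕ) (hq : q.Prime) (hk : 0 < k) (hn : 0 < n)
    (hkr : k ∣ r) (hrkn : r / k ∣ n)
    (hF : Fintype.card F = q ^ r)
    (σ : G) (hgen : ∀ g : G, g ∈ Subgroup.zpowers σ) (hord : orderOf σ = n)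
    (η : G →* RingAut F) (hη : ∀ x : F, η σ x = x ^ q ^ k) :
    Nonempty (Quot (pullbackRel η) ≃
      Quot (fun a b : ZMod (Nat.gcd (q ^ k - 1) (n * k / r)) =>
        ∃ j : ℕ, Nat.gcd j n = 1 ∧ j ≡ 1 [MOD r / k] ∧ b = (j : ZMod _) * a)) := by
  have hσ : IsCyclicGenerator σ n := ⟨hgen, hord, hn⟩
  have hcard : Nat.card (H2 η) = Nat.gcd (q ^ k - 1) (n * k / r) := by
    rw [hσ.card_H2, relIndex_range_cyclicNormHom hσ hq.one_lt hF hk hkr hrkn hη]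
  have : IsCyclic (H2 η) := isCyclic_of_surjective _ hσ.carryClass_surjective
  obtain ⟨E, hE⟩ := IsCyclic.exists_equiv_zmod hcard
  have hmod : ∀ j : ℕ, η σ ^ j = η σ ↔ j ≡ 1 [MOD r / k] := fun j => by
    rw [← orderOf_eq_div_of_forall_apply_eq_pow_pow hq.one_lt hF hk hkr hη,
      ← pow_eq_pow_iff_modEq, pow_one]
  refine ⟨Quot.congr E fun c₁ c₂ => ?_⟩
  rw [hσ.pullbackRel_iff]
  exact exists_congr fun j => and_congr Iff.rfl <| and_congr (hmod j) <| by
    rw [← hE, E.injective.eq_iff]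

/-- let the cyclic group `C_n = ⟨σ⟩` act on `F = F_{q^r}` via
`η(σ) = φ^k`, and set `m = gcd(q^k - 1, nk/r)`. Then the set of orbits of the pullback
action of `Aut_η(C_n)` on `H²_η(C_n, F^*)` is in bijection with the quotient of
`ℤ/mℤ` by the relation `a ∼ b` iff `b = j·a` for some integer `j` coprime to `n` with
`j ≡ 1 (mod r/k)`. -/
theorem orbits_equiv_zmod_quot {G F : Type*} [Group G] [Field F] [Fintype F]
    (q r k n : ℕ) (hq : q.Prime) (hr : 0 < r) (hk : 0 < k) (hn : 0 < n)
    (hkr : k ∣ r) (hrkn : r / k ∣ n)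
    (hF : Fintype.card F = q ^ r)
    (σ : G) (hgen : ∀ g : G, g ∈ Subgroup.zpowers σ) (hord : orderOf σ = n)
    (η : G →* RingAut F) (hη : ∀ x : F, η σ x = x ^ q ^ k) :
    Nonempty (Quot (pullbackRel η) ≃
      Quot (fun a b : ZMod (Nat.gcd (q ^ k - 1) (n * k / r)) =>
        ∃ j : ℕ, Nat.gcd j n = 1 ∧ j ≡ 1 [MOD r / k] ∧ b = (j : ZMod _) * a)) :=
  orbits_equiv_zmod_quot_general q r k n hq hk hn hkr hrkn hF σ hgen hord η hη
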